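/- arXiv:2505.21111 — 5 statements merged into one kernel-verified Lean document; each statement's English description precedes it below -/
import Mathlib

section
/- In the formal power series ring ℤ[[q]], ∑_{n≥0} PDO(n) q^n = f_4 f_6² / (f_1 f_3 f_{12}), where the denominator factors are units since each has constant term 1. -/
/-- The number of PDO (designated-summand) versions of a partition: the product of the
multiplicities of its distinct part sizes. -/
def pdoWeight {n : ℕ} (l : n.Partition) : ℕ :=
  ∏ a ∈ l.parts.toFinset, l.parts.count a

/-- `PDO n` is the number of partitions of `n` into odd parts with designated summands. -/
def PDO (n : ℕ) : ℕ :=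
  ∑ l ∈ Nat.Partition.odds n, pdoWeight l

/-- `f r = ∏_{n ≥ 1} (1 - q^{r n})` in `ℤ[[q]]`, defined coefficientwise: the coefficient of
`q^n` agrees with that of every sufficiently long partial product (for `r ≥ 1`, the factors with
index beyond `n` do not affect the coefficient of `q^n`). -/
noncomputable def f (r : ℕ) : PowerSeries ℤ :=
  PowerSeries.mk fun n =>
    PowerSeries.coeff (R := ℤ) n
      (∏ i ∈ Finset.range (n + 1), (1 - (PowerSeries.X : PowerSeries ℤ) ^ (r * (i + 1))))

/-!
Each odd part size `k` contributes the factor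
`1 + ∑_{m ≥ 1} m q^{km} = (1 - q^k + q^{2k}) / (1 - q^k)²` to the generating function,
and `(1 - y + y²)(1 + y) = 1 + y³`. Hence
`∑ PDO(n) qⁿ = ∏_{k odd} (1 + q^{3k}) / (∏_{k odd} (1 - q^k)² ∏_{k odd} (1 + q^k))`,
and the three odd products are eta quotients: `∏_{k odd} (1 - q^{rk}) = f_r / f_{2r}` and
`∏_{k odd} (1 + q^{rk}) = f_{2r}² / (f_r f_{4r})`. Infinite products are limits in the
`X`-adic topology of `ℤ⟦X⟧`.
-/

open Finset PowerSeries PowerSeries.WithPiTopology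
open scoped PowerSeries.WithPiTopology

namespace PowerSeries

variable {R : Type*} [CommRing R]

theorem coeff_prod_eq_of_subset_of_X_pow_dvd_sub_one {ι : Type*} [DecidableEq ι]
    {F : ι → R⟦X⟧} {s t : Finset ι} {d : ℕ} (hst : s ⊆ t)
    (hF : ∀ i ∈ t \ s, X ^ (d + 1) ∣ F i - 1) :
    coeff d (∏ i ∈ t, F i) = coeff d (∏ i ∈ s, F i) := by
  have hmk : ∀ i ∈ t \ s, Ideal.Quotient.mk (Ideal.span {X ^ (d + 1)}) (F i) = 1 := fun i hi => by
    rw [← map_one (Ideal.Quotient.mk _), Ideal.Quotient.eq, Ideal.mem_span_singleton]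
    exact hF i hi
  have hdvd : X ^ (d + 1) ∣ ∏ i ∈ t, F i - ∏ i ∈ s, F i := by
    rw [← Ideal.mem_span_singleton, ← Ideal.Quotient.eq, ← prod_sdiff hst, map_mul, map_prod,
      prod_eq_one hmk, one_mul]
  rw [← sub_eq_zero, ← map_sub]
  exact X_pow_dvd_iff.mp hdvd d d.lt_succ_self

theorem X_pow_dvd_one_sub_X_pow_sub_one {m n : ℕ} (h : m ≤ n) :
    (X : R⟦X⟧) ^ m ∣ (1 - X ^ n) - 1 := by
  rw [sub_sub_cancel_left, dvd_neg]
  exact pow_dvd_pow X h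

theorem X_pow_dvd_one_add_X_pow_sub_one {m n : ℕ} (h : m ≤ n) :
    (X : R⟦X⟧) ^ m ∣ (1 + X ^ n) - 1 := by
  rw [add_sub_cancel_left]
  exact pow_dvd_pow X h

theorem mk_natCast_mul_one_sub_sq : (mk fun n => (n : R)) * (1 - X) ^ 2 = X := by
  have hmk : (mk fun n => (n : R)) = X * (invOneSubPow R 2).val := by
    ext n
    rcases n with _ | n
    · simp
    · simp [invOneSubPow_val_succ_eq_mk_add_choose, add_comm]
  rw [hmk, mul_assoc, ← invOneSubPow_inv_eq_one_sub_pow, Units.val_inv, mul_one]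

section Topology

variable [TopologicalSpace R]

theorem hasProd_mk_coeff_prod_range {F : ℕ → R⟦X⟧} (hF : ∀ i, X ^ (i + 1) ∣ F i - 1) :
    HasProd F (mk fun n => coeff n (∏ i ∈ range (n + 1), F i)) := by
  rw [HasProd, tendsto_iff_coeff_tendsto]
  refine fun d => tendsto_atTop_of_eventually_const fun s (hs : range (d + 1) ⊆ s) => ?_
  rw [coeff_mk, coeff_prod_eq_of_subset_of_X_pow_dvd_sub_one hs fun i hi => ?_]
  have hi : d + 1 ≤ i := by simpa using (mem_sdiff.mp hi).2
  exact (pow_dvd_pow X (by omega)).trans (hF i)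

theorem multipliable_of_X_pow_dvd_sub_one {F : ℕ → R⟦X⟧} (hF : ∀ i, X ^ (i + 1) ∣ F i - 1) :
    Multipliable F :=
  (hasProd_mk_coeff_prod_range hF).multipliable

variable [T2Space R]

theorem tsum_natCast_smul_X_pow_eq_expand {k : ℕ} (hk : k ≠ 0) :
    ∑' j, ((j + 1 : ℕ) : R) • (X : R⟦X⟧) ^ (k * (j + 1)) = expand k hk (mk fun n => (n : R)) := by
  ext n
  rw [(Nat.Partition.summable_genFun_term' (fun _ c => (c : R)) hk).map_tsum _
    (continuous_coeff R n), coeff_expand]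
  simp only [map_smul, coeff_X_pow, smul_eq_mul, mul_ite, mul_one, mul_zero, coeff_mk]
  split_ifs with hdvd
  · obtain ⟨m, rfl⟩ := hdvd
    rcases m with _ | m
    · simp [hk]
    · rw [tsum_eq_single m fun j hj => if_neg (by simp [hk]; omega)]
      simp [hk]
  · exact (tsum_congr fun j => if_neg fun h => hdvd ⟨j + 1, h⟩).trans tsum_zero

theorem one_add_tsum_mul_one_sub_sq_mul_one_add {k : ℕ} (hk : k ≠ 0) :
    (1 + ∑' j, ((j + 1 : ℕ) : R) • (X : R⟦X⟧) ^ (k * (j + 1))) * (1 - X ^ k) ^ 2 * (1 + X ^ k)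
      = 1 + X ^ (3 * k) := by
  have h := congrArg (expand k hk) (mk_natCast_mul_one_sub_sq (R := R))
  rw [map_mul, map_pow, map_sub, map_one, expand_X] at h
  rw [tsum_natCast_smul_X_pow_eq_expand hk, mul_comm 3, pow_mul]
  linear_combination (1 + X ^ k) * h

end Topology

end PowerSeries

section PDOSeries

variable {R : Type*} [CommSemiring R]

theorem mk_PDO_eq_genFun :
    mk (fun n => (PDO n : R)) = Nat.Partition.genFun fun i c => if Odd i then (c : R) else 0 := by
  ext n
  simp only [coeff_mk, Nat.Partition.coeff_genFun, PDO, Nat.Partition.odds,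
    Nat.Partition.restricted, sum_filter, Finsupp.prod, Multiset.toFinsupp_support,
    Multiset.toFinsupp_apply, pdoWeight, Nat.not_even_iff_odd]
  push_cast
  refine sum_congr rfl fun p _ => ?_
  split_ifs with hodd
  · exact prod_congr rfl fun a ha => (if_pos (hodd a (Multiset.mem_toFinset.mp ha))).symm
  · obtain ⟨a, ha, heven⟩ := not_forall₂.mp hodd
    exact (prod_eq_zero (Multiset.mem_toFinset.mpr ha) (if_neg heven)).symm

variable [TopologicalSpace R] [T2Space R]

theorem hasProd_mk_PDO :
    HasProd (fun k => 1 + ∑' j, ((j + 1 : ℕ) : R) • (X : R⟦X⟧) ^ ((2 * k + 1) * (j + 1)))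
      (mk fun n => (PDO n : R)) := by
  rw [mk_PDO_eq_genFun]
  -- the `i`-th factor of `genFun` belongs to the part size `i + 1`, so only even `i` contribute
  refine ((mul_right_injective₀ (two_ne_zero (α := ℕ))).hasProd_iff ?_).mpr
    (Nat.Partition.hasProd_genFun _) |>.congr_fun ?_
  · intro i hi
    have hodd : ¬Odd (i + 1) := fun ⟨k, hk⟩ => hi ⟨k, show 2 * k = i by omega⟩
    simp [hodd]
  · intro k
    simp only [Function.comp_apply, if_pos (odd_two_mul_add_one k)]

end PDOSeries

theorem hasProd_f {r : ℕ} (hr : 0 < r) : HasProd (fun i => 1 - X ^ (r * (i + 1))) (f r) :=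
  hasProd_mk_coeff_prod_range fun _ =>
    X_pow_dvd_one_sub_X_pow_sub_one (Nat.le_mul_of_pos_left _ hr)

theorem constantCoeff_f {r : ℕ} (hr : 0 < r) : constantCoeff (f r) = 1 := by
  simpa [f] using hr.ne'

theorem f_ne_zero {r : ℕ} (hr : 0 < r) : f r ≠ 0 := fun h => by
  simpa [h] using constantCoeff_f hr

noncomputable def oddProdSub (r : ℕ) : ℤ⟦X⟧ := ∏' k, (1 - X ^ (r * (2 * k + 1)))

noncomputable def oddProdAdd (r : ℕ) : ℤ⟦X⟧ := ∏' k, (1 + X ^ (r * (2 * k + 1)))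

theorem multipliable_oddProdSub {r : ℕ} (hr : 0 < r) :
    Multipliable fun k => (1 - X ^ (r * (2 * k + 1)) : ℤ⟦X⟧) :=
  multipliable_of_X_pow_dvd_sub_one fun _ => X_pow_dvd_one_sub_X_pow_sub_one (by nlinarith)

theorem multipliable_oddProdAdd {r : ℕ} (hr : 0 < r) :
    Multipliable fun k => (1 + X ^ (r * (2 * k + 1)) : ℤ⟦X⟧) :=
  multipliable_of_X_pow_dvd_sub_one fun _ => X_pow_dvd_one_add_X_pow_sub_one (by nlinarith)

theorem f_eq_oddProdSub_mul {r : ℕ} (hr : 0 < r) : f r = oddProdSub r * f (2 * r) := by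
  have heven : HasProd (fun k => 1 - X ^ (r * (2 * k + 1 + 1))) (f (2 * r)) := by
    convert hasProd_f (r := 2 * r) (by omega) using 1
    funext k
    ring_nf
  exact (hasProd_f hr).unique (HasProd.even_mul_odd (f := fun i => 1 - X ^ (r * (i + 1)))
    (multipliable_oddProdSub hr).hasProd heven)

theorem oddProdAdd_mul_oddProdSub {r : ℕ} (hr : 0 < r) :
    oddProdAdd r * oddProdSub r = oddProdSub (2 * r) := by
  rw [oddProdAdd, oddProdSub, ← (multipliable_oddProdAdd hr).tprod_mul
    (multipliable_oddProdSub hr), oddProdSub]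
  refine tprod_congr fun k => ?_
  rw [mul_assoc, mul_comm 2, pow_mul]
  ring

theorem oddProdAdd_mul_f_mul_f {r : ℕ} (hr : 0 < r) :
    oddProdAdd r * f r * f (4 * r) = f (2 * r) ^ 2 := by
  rw [show 4 * r = 2 * (2 * r) by ring]
  linear_combination (f (2 * r) * f (2 * (2 * r))) * oddProdAdd_mul_oddProdSub hr
    + oddProdAdd r * f (2 * (2 * r)) * f_eq_oddProdSub_mul hr
    - f (2 * r) * f_eq_oddProdSub_mul (r := 2 * r) (by omega)

theorem mk_PDO_mul_oddProdSub_sq_mul_oddProdAdd :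
    mk (fun n => (PDO n : ℤ)) * oddProdSub 1 ^ 2 * oddProdAdd 1 = oddProdAdd 3 := by
  have hsub := (multipliable_oddProdSub one_pos).hasProd
  have h := ((hasProd_mk_PDO.mul hsub).mul hsub).mul (multipliable_oddProdAdd one_pos).hasProd
  rw [sq, ← mul_assoc]
  refine h.unique ((multipliable_oddProdAdd (r := 3) (by norm_num)).hasProd.congr_fun fun k => ?_)
  simp only [one_mul, mul_assoc, ← sq]
  rw [← mul_assoc, one_add_tsum_mul_one_sub_sq_mul_one_add (by omega)]

theorem mk_PDO_mul_f1_f3_f12 :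
    mk (fun n => (PDO n : ℤ)) * (f 1 * f 3 * f 12) = f 4 * f 6 ^ 2 := by
  have h2 := f_eq_oddProdSub_mul (r := 1) one_pos
  have h4 := oddProdAdd_mul_f_mul_f (r := 1) one_pos
  have h12 := oddProdAdd_mul_f_mul_f (r := 3) (by norm_num)
  norm_num at h2 h4 h12
  refine mul_right_cancel₀ (mul_ne_zero (f_ne_zero one_pos) (pow_ne_zero 2 (f_ne_zero two_pos))) ?_
  linear_combination
    (f 1 + oddProdSub 1 * f 2) * mk (fun n => (PDO n : ℤ)) * f 2 ^ 2 * f 3 * f 12 * h2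
    - mk (fun n => (PDO n : ℤ)) * oddProdSub 1 ^ 2 * f 2 ^ 2 * f 3 * f 12 * h4
    + f 1 * f 4 * f 2 ^ 2 * f 3 * f 12 * mk_PDO_mul_oddProdSub_sq_mul_oddProdAdd
    + f 1 * f 4 * f 2 ^ 2 * h12

/-- `∑_{n ≥ 0} PDO(n) q^n = f_4 f_6^2 / (f_1 f_3 f_12)` in `ℤ[[q]]`; the denominator is a unit
(constant term `1`), and `Ring.inverse` gives its genuine inverse. -/
theorem pdo_genFun :
    PowerSeries.mk (fun n => (PDO n : ℤ)) =
      f 4 * f 6 ^ 2 * Ring.inverse (f 1 * f 3 * f 12) := by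
  have hunit : IsUnit (f 1 * f 3 * f 12) := by
    simp [isUnit_iff_constantCoeff, constantCoeff_f]
  rw [Ring.eq_mul_inverse_iff_mul_eq _ _ _ hunit, mk_PDO_mul_f1_f3_f12]
end

section
/- For every real number x, the following identity holds in ℝ[[q]]: (1 + 2∑_{n≥1} q^{2n²})·(1 + 2∑_{n≥1} T_{4n}(x/2) q^{2n²}) = (1 + 2∑_{n≥1} T_{4n}(x/2) q^{4n²})² + 4q²·(∑_{n≥1} T_{4n−2}(x/2) q^{4n(n−1)})². -/
/-!
Written as sums over `ℤ` and `ℤ²`, the left side is `∑_{a,b} T_{4b}(x/2) q^{2a² + 2b²}`.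
Substituting `(a, b) = (s + t + ε, s - t)` with `ε ∈ {0, 1}` turns `2a² + 2b²` into
`(2s + ε)² + (2t + ε)²` and `4b` into `(4s + 2ε) - (4t + 2ε)`. For each `ε` it remains to see that
`∑_{s,t} T_{f s - f t} q^{w s + w t} = (∑_s T_{f s} q^{w s})²` whenever an involution of the index
set preserves `w` and negates `f`: averaging over that involution replaces `T_{m - n}` by
`(T_{m + n} + T_{m - n}) / 2 = T_m T_n`.
-/

/-- The formal power series `∑_{n ≥ 1} c(n) q^{e(n)}` in `ℝ[[q]]`, defined coefficientwise.
(For each exponent function `e` used here, any `n ≥ 1` with `e n = k` satisfies `n ≤ k + 1`,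
so the truncated range captures every term.) -/
noncomputable def mkSum (e : ℕ → ℕ) (c : ℕ → ℝ) : PowerSeries ℝ :=
  PowerSeries.mk fun k => ∑ n ∈ Finset.range (k + 2), if 1 ≤ n ∧ e n = k then c n else 0

open PowerSeries

theorem finsum_sum_type {ι κ M : Type*} [AddCommMonoid M] {f : ι ⊕ κ → M}
    (hf : (Function.support f).Finite) :
    ∑ᶠ x, f x = ∑ᶠ i, f (Sum.inl i) + ∑ᶠ j, f (Sum.inr j) := by
  rw [← finsum_mem_univ, ← Set.range_inl_union_range_inr,
    finsum_mem_union' Set.isCompl_range_inl_range_inr.disjoint (hf.inter_of_right _)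
      (hf.inter_of_right _),
    finsum_mem_range Sum.inl_injective, finsum_mem_range Sum.inr_injective]

def HasFiniteSublevels {ι : Type*} (w : ι → ℕ) : Prop :=
  ∀ k, {i | w i ≤ k}.Finite

namespace HasFiniteSublevels

variable {ι κ : Type*} {w : ι → ℕ} {v : κ → ℕ}

theorem finite_fiber (hw : HasFiniteSublevels w) (k : ℕ) : {i | w i = k}.Finite :=
  (hw k).subset fun _ hi => le_of_eq hi

theorem mono {w' : ι → ℕ} (hw : HasFiniteSublevels w) (h : ∀ i, w i ≤ w' i) :
    HasFiniteSublevels w' :=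
  fun k => (hw k).subset fun i hi => (h i).trans hi

theorem comp_injective {f : κ → ι} (hw : HasFiniteSublevels w) (hf : f.Injective) :
    HasFiniteSublevels (w ∘ f) :=
  fun k => (hw k).preimage hf.injOn

theorem prod_add (hw : HasFiniteSublevels w) (hv : HasFiniteSublevels v) :
    HasFiniteSublevels fun p : ι × κ => w p.1 + v p.2 :=
  fun k => ((hw k).prod (hv k)).subset fun p (hp : w p.1 + v p.2 ≤ k) =>
    ⟨show w p.1 ≤ k by omega, show v p.2 ≤ k by omega⟩

end HasFiniteSublevels

theorem hasFiniteSublevels_id : HasFiniteSublevels fun n : ℕ => n := Set.finite_Iic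

theorem hasFiniteSublevels_natAbs : HasFiniteSublevels Int.natAbs := fun k =>
  (Set.finite_Icc (-(k : ℤ)) k).subset fun a (ha : a.natAbs ≤ k) =>
    show -(k : ℤ) ≤ a ∧ a ≤ k by omega

theorem le_mul_sq {C : ℕ} (hC : 0 < C) (n : ℕ) : n ≤ C * n ^ 2 :=
  (Nat.le_self_pow two_ne_zero n).trans (Nat.le_mul_of_pos_left _ hC)

theorem hasFiniteSublevels_mul_natAbs_sq {C : ℕ} (hC : 0 < C) :
    HasFiniteSublevels fun a : ℤ => C * a.natAbs ^ 2 :=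
  hasFiniteSublevels_natAbs.mono fun _ => le_mul_sq hC _

theorem hasFiniteSublevels_natAbs_two_mul_add_one_sq :
    HasFiniteSublevels fun s : ℤ => (2 * s + 1).natAbs ^ 2 :=
  hasFiniteSublevels_natAbs.mono fun s =>
    (show s.natAbs ≤ (2 * s + 1).natAbs by omega).trans (Nat.le_self_pow two_ne_zero _)

/-- `∑ᵢ c i X ^ w i`. Its coefficients are `finsum`s, which are `0` on infinite supports, so this
is the intended series only when the fibres of `w` are finite. -/
noncomputable def weightSeries {ι R : Type*} [Semiring R] (w : ι → ℕ) (c : ι → R) : R⟦X⟧ :=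
  mk fun k => ∑ᶠ (i) (_ : w i = k), c i

section weightSeries

open Finset.HasAntidiagonal (antidiagonal mem_antidiagonal)

variable {ι κ R : Type*} [Semiring R]

theorem coeff_weightSeries (w : ι → ℕ) (c : ι → R) (k : ℕ) :
    coeff k (weightSeries w c) = ∑ᶠ (i) (_ : w i = k), c i :=
  coeff_mk _ _

theorem coeff_weightSeries_eq_sum {w : ι → ℕ} (c : ι → R) {k m : ℕ} (hm : m ≤ k)
    {s : Finset ι} (hs : ∀ i, w i ≤ k → i ∈ s) :
    coeff m (weightSeries w c) = ∑ i ∈ s, if w i = m then c i else 0 := by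
  rw [coeff_weightSeries, ← Finset.sum_filter]
  refine finsum_cond_eq_sum_of_cond_iff _ fun {i} _ => ?_
  rw [Finset.mem_filter]
  exact ⟨fun h => ⟨hs i (h ▸ hm), h⟩, And.right⟩

theorem weightSeries_comp_equiv (e : κ ≃ ι) (w : ι → ℕ) (c : ι → R) :
    weightSeries (w ∘ e) (c ∘ e) = weightSeries w c := by
  ext k
  simp only [coeff_weightSeries, Function.comp_apply]
  exact finsum_comp_equiv e (f := fun i => ∑ᶠ (_ : w i = k), c i)

theorem weightSeries_add {w : ι → ℕ} (hw : HasFiniteSublevels w) (c d : ι → R) :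
    weightSeries w (fun i => c i + d i) = weightSeries w c + weightSeries w d := by
  ext k
  simp only [map_add, coeff_weightSeries]
  exact finsum_mem_add_distrib (s := {i | w i = k}) (hw.finite_fiber k)

theorem weightSeries_sum_type {w : ι ⊕ κ → ℕ} (hw : HasFiniteSublevels w) (c : ι ⊕ κ → R) :
    weightSeries w c =
      weightSeries (w ∘ Sum.inl) (c ∘ Sum.inl) + weightSeries (w ∘ Sum.inr) (c ∘ Sum.inr) := by
  ext k
  rw [map_add, coeff_weightSeries, finsum_sum_type]
  · simp only [coeff_weightSeries, Function.comp_apply]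
  · refine (hw.finite_fiber k).subset fun x hx => ?_
    by_contra h
    simp [show w x ≠ k from h] at hx

theorem weightSeries_unique [Unique ι] (w : ι → ℕ) (c : ι → R) :
    weightSeries w c = monomial (w default) (c default) := by
  ext k
  rw [coeff_weightSeries, finsum_unique, finsum_eq_if, coeff_monomial]
  exact if_congr eq_comm rfl rfl

theorem X_pow_mul_weightSeries (j : ℕ) (w : ι → ℕ) (c : ι → R) :
    X ^ j * weightSeries w c = weightSeries (fun i => w i + j) c := by
  ext k
  rw [coeff_X_pow_mul', coeff_weightSeries, coeff_weightSeries]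
  split_ifs with hj
  · exact finsum_congr fun i => by rw [show (w i + j = k) = (w i = k - j) from propext (by omega)]
  · exact (finsum_eq_zero_of_forall_eq_zero fun i => by simp [show w i + j ≠ k by omega]).symm

theorem weightSeries_mul {w : ι → ℕ} {v : κ → ℕ} (hw : HasFiniteSublevels w)
    (hv : HasFiniteSublevels v) (c : ι → R) (d : κ → R) :
    weightSeries w c * weightSeries v d =
      weightSeries (fun p : ι × κ => w p.1 + v p.2) (fun p => c p.1 * d p.2) := by
  classical
  ext k
  set s := (hw k).toFinset
  set t := (hv k).toFinset
  have hs : ∀ i, w i ≤ k → i ∈ s := fun i hi => (hw k).mem_toFinset.mpr hi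
  have ht : ∀ j, v j ≤ k → j ∈ t := fun j hj => (hv k).mem_toFinset.mpr hj
  rw [coeff_mul, coeff_weightSeries_eq_sum _ le_rfl (s := s ×ˢ t) fun p hp =>
    Finset.mem_product.mpr ⟨hs _ (by omega), ht _ (by omega)⟩, Finset.sum_product]
  calc ∑ p ∈ antidiagonal k, coeff p.1 (weightSeries w c) * coeff p.2 (weightSeries v d)
      = ∑ p ∈ antidiagonal k, ∑ i ∈ s, ∑ j ∈ t,
          if (w i, v j) = p then c i * d j else 0 := by
        refine Finset.sum_congr rfl fun p hp => ?_
        have hpk : p.1 + p.2 = k := mem_antidiagonal.mp hp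
        rw [coeff_weightSeries_eq_sum c (by omega) hs, coeff_weightSeries_eq_sum d (by omega) ht,
          Finset.sum_mul_sum]
        simp only [ite_zero_mul_ite_zero, Prod.ext_iff]
    _ = ∑ i ∈ s, ∑ j ∈ t, if w i + v j = k then c i * d j else 0 := by
        rw [Finset.sum_comm]
        refine Finset.sum_congr rfl fun i _ => ?_
        rw [Finset.sum_comm]
        simp only [Finset.sum_ite_eq, mem_antidiagonal]

theorem weightSeries_nat {w : ℕ → ℕ} (hw : HasFiniteSublevels w) (c : ℕ → R) :
    weightSeries w c =
      monomial (w 0) (c 0) + weightSeries (fun n => w (n + 1)) (fun n => c (n + 1)) := by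
  rw [← weightSeries_comp_equiv Equiv.natSumPUnitEquivNat.{0},
    weightSeries_sum_type (hw.comp_injective Equiv.natSumPUnitEquivNat.injective),
    weightSeries_unique (ι := PUnit), add_comm]
  rfl

theorem weightSeries_int {w : ℤ → ℕ} (hw : HasFiniteSublevels w) (c : ℤ → R) :
    weightSeries w c = weightSeries (fun n : ℕ => w n) (fun n => c n) +
      weightSeries (fun n => w (Int.negSucc n)) (fun n => c (Int.negSucc n)) := by
  rw [← weightSeries_comp_equiv Equiv.intEquivNatSumNat.symm,
    weightSeries_sum_type (hw.comp_injective Equiv.intEquivNatSumNat.symm.injective)]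
  rfl

end weightSeries

theorem mkSum_eq_weightSeries {e : ℕ → ℕ} (he : ∀ n, n ≤ e (n + 1)) (d : ℕ → ℝ) :
    mkSum e d = weightSeries (fun n => e (n + 1)) (fun n => d (n + 1)) := by
  ext k
  rw [mkSum, coeff_mk, coeff_weightSeries_eq_sum _ le_rfl (s := Finset.range (k + 1))
    fun n hn => Finset.mem_range.mpr (by linarith [he n]), Finset.sum_range_succ']
  simp

theorem one_add_two_mul_mkSum {e : ℕ → ℕ} (he : ∀ n, n ≤ e n) (he0 : e 0 = 0) {d : ℕ → ℝ}
    (hd0 : d 0 = 1) {c : ℤ → ℝ} (hcd : ∀ n : ℕ, c n = d n) (hc : ∀ a, c (-a) = c a) :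
    1 + 2 * mkSum e d = weightSeries (fun a : ℤ => e a.natAbs) c := by
  have hc_negSucc : ∀ n : ℕ, c (Int.negSucc n) = d (n + 1) := fun n => by
    rw [Int.negSucc_eq, hc, ← Nat.cast_succ, hcd]
  rw [weightSeries_int (hasFiniteSublevels_natAbs.mono fun a => he _)]
  simp only [Int.natAbs_natCast, Int.natAbs_negSucc, hcd, hc_negSucc]
  rw [weightSeries_nat (hasFiniteSublevels_id.mono he), he0, hd0,
    mkSum_eq_weightSeries fun n => (Nat.le_succ n).trans (he _)]
  simp only [monomial_zero_eq_C, map_one, Nat.succ_eq_add_one]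
  ring

theorem two_mul_X_mul_mkSum {d : ℕ → ℝ} {c : ℤ → ℝ} (hcd : ∀ n : ℕ, c n = d (n + 1))
    (hc : ∀ s, c (-1 - s) = c s) :
    2 * (X * mkSum (fun n => 4 * n * (n - 1)) d) =
      weightSeries (fun s : ℤ => (2 * s + 1).natAbs ^ 2) c := by
  have hc_negSucc : ∀ n : ℕ, c (Int.negSucc n) = c n := fun n => by
    rw [Int.negSucc_eq, show -((n : ℤ) + 1) = -1 - n by ring, hc]
  have habs_natCast : ∀ n : ℕ, (2 * (n : ℤ) + 1).natAbs = 2 * n + 1 := fun n => by omega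
  have habs_negSucc : ∀ n : ℕ, (2 * Int.negSucc n + 1).natAbs = 2 * n + 1 := fun n => by
    rw [Int.negSucc_eq]; omega
  have hsq : ∀ n : ℕ, 4 * (n + 1) * (n + 1 - 1) + 1 = (2 * n + 1) ^ 2 := fun n => by
    rw [Nat.add_sub_cancel]; ring
  have he : ∀ n : ℕ, n ≤ 4 * (n + 1) * (n + 1 - 1) := fun n => by
    rw [Nat.add_sub_cancel]; nlinarith
  rw [weightSeries_int hasFiniteSublevels_natAbs_two_mul_add_one_sq, mkSum_eq_weightSeries he,
    ← pow_one X, X_pow_mul_weightSeries, two_mul]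
  simp only [hc_negSucc, hcd, habs_natCast, habs_negSucc, hsq]

def intPairParityEquiv : (ℤ × ℤ) ⊕ (ℤ × ℤ) ≃ ℤ × ℤ where
  toFun := Sum.elim (fun p => (p.1 + p.2, p.1 - p.2)) fun p => (p.1 + p.2 + 1, p.1 - p.2)
  invFun p :=
    if (p.1 + p.2) % 2 = 0 then .inl ((p.1 + p.2) / 2, (p.1 - p.2) / 2)
    else .inr ((p.1 + p.2 - 1) / 2, (p.1 - p.2 - 1) / 2)
  left_inv := by
    rintro (⟨s, t⟩ | ⟨s, t⟩) <;> dsimp only [Sum.elim_inl, Sum.elim_inr] <;> split_ifs <;>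
      (try simp only [Sum.inl.injEq, Sum.inr.injEq, Prod.mk.injEq]) <;> omega
  right_inv := by
    rintro ⟨a, b⟩
    dsimp only
    split_ifs <;> simp only [Sum.elim_inl, Sum.elim_inr, Prod.mk.injEq] <;> omega

theorem weightSeries_two_sq_add_two_sq {R : Type*} [Semiring R] (c : ℤ × ℤ → R) :
    weightSeries (fun p : ℤ × ℤ => 2 * p.1.natAbs ^ 2 + 2 * p.2.natAbs ^ 2) c =
      weightSeries (fun p : ℤ × ℤ => 4 * p.1.natAbs ^ 2 + 4 * p.2.natAbs ^ 2)
          (fun p => c (p.1 + p.2, p.1 - p.2)) +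
        weightSeries (fun p : ℤ × ℤ => (2 * p.1 + 1).natAbs ^ 2 + (2 * p.2 + 1).natAbs ^ 2)
          (fun p => c (p.1 + p.2 + 1, p.1 - p.2)) := by
  have hw := (hasFiniteSublevels_mul_natAbs_sq two_pos).prod_add
    (hasFiniteSublevels_mul_natAbs_sq two_pos)
  rw [← weightSeries_comp_equiv intPairParityEquiv,
    weightSeries_sum_type (hw.comp_injective intPairParityEquiv.injective)]
  congr 2 <;> funext ⟨s, t⟩
  · show 2 * (s + t).natAbs ^ 2 + 2 * (s - t).natAbs ^ 2 = 4 * s.natAbs ^ 2 + 4 * t.natAbs ^ 2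
    zify
    simp only [sq_abs]
    ring
  · show 2 * (s + t + 1).natAbs ^ 2 + 2 * (s - t).natAbs ^ 2 =
      (2 * s + 1).natAbs ^ 2 + (2 * t + 1).natAbs ^ 2
    zify
    simp only [sq_abs]
    ring

open Polynomial.Chebyshev in
theorem weightSeries_chebyshevT_sub {ι : Type*} {w : ι → ℕ} (hw : HasFiniteSublevels w)
    (f : ι → ℤ) (σ : ι ≃ ι) (hσw : ∀ i, w (σ i) = w i) (hσf : ∀ i, f (σ i) = -f i) (y : ℝ) :
    weightSeries (fun p : ι × ι => w p.1 + w p.2) (fun p => (T ℝ (f p.1 - f p.2)).eval y) =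
      weightSeries w (fun i => (T ℝ (f i)).eval y) ^ 2 := by
  set S := weightSeries (fun p : ι × ι => w p.1 + w p.2)
    fun p => (T ℝ (f p.1 - f p.2)).eval y with hS
  have hw₂ := hw.prod_add hw
  have hreflect : S = weightSeries (fun p : ι × ι => w p.1 + w p.2)
      (fun p => (T ℝ (f p.1 + f p.2)).eval y) := by
    rw [hS]
    refine Eq.trans ?_ (weightSeries_comp_equiv ((Equiv.refl ι).prodCongr σ) _ _)
    congr 1 <;> funext p <;> simp [hσw, hσf, sub_eq_add_neg]
  refine smul_right_injective _ (two_ne_zero (α := ℝ)) ?_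
  calc (2 : ℝ) • S
      = weightSeries (fun p : ι × ι => w p.1 + w p.2)
          (fun p => (T ℝ (f p.1 + f p.2)).eval y + (T ℝ (f p.1 - f p.2)).eval y) := by
        rw [two_smul, weightSeries_add hw₂, ← hreflect]
    _ = weightSeries (fun p : ι × ι => w p.1 + w p.2)
          (fun p => 2 * ((T ℝ (f p.1)).eval y * (T ℝ (f p.2)).eval y)) := by
        simp only [← Polynomial.eval_add, ← T_mul_T, Polynomial.eval_mul, Polynomial.eval_ofNat,
          mul_assoc]
    _ = (2 : ℝ) • weightSeries w (fun i => (T ℝ (f i)).eval y) ^ 2 := by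
        rw [sq, weightSeries_mul hw hw, two_smul, ← weightSeries_add hw₂]
        simp only [two_mul]

open Polynomial Chebyshev in
/-- For every real `x`:
`(1 + 2∑_{n≥1} q^{2n²})(1 + 2∑_{n≥1} T_{4n}(x/2) q^{2n²})
  = (1 + 2∑_{n≥1} T_{4n}(x/2) q^{4n²})² + 4q²(∑_{n≥1} T_{4n-2}(x/2) q^{4n(n-1)})²` in `ℝ[[q]]`. -/
theorem cheby_dissection_even (x : ℝ) :
    (1 + 2 * mkSum (fun n => 2 * n ^ 2) fun _ => 1) *
        (1 + 2 * mkSum (fun n => 2 * n ^ 2) fun n =>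
          (Polynomial.Chebyshev.T ℝ (4 * (n : ℤ))).eval (x / 2)) =
      (1 + 2 * mkSum (fun n => 4 * n ^ 2) fun n =>
          (Polynomial.Chebyshev.T ℝ (4 * (n : ℤ))).eval (x / 2)) ^ 2 +
        4 * PowerSeries.X ^ 2 *
          (mkSum (fun n => 4 * n * (n - 1)) fun n =>
            (Polynomial.Chebyshev.T ℝ (4 * (n : ℤ) - 2)).eval (x / 2)) ^ 2 := by
  have hT_even : ∀ a b : ℤ, a = -b → (T ℝ a).eval (x / 2) = (T ℝ b).eval (x / 2) := by
    rintro a b rfl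
    exact congrArg _ (T_neg ℝ b)
  rw [one_add_two_mul_mkSum (le_mul_sq two_pos) rfl (d := fun _ => 1) rfl (c := fun _ => 1)
      (fun _ => rfl) (fun _ => rfl),
    one_add_two_mul_mkSum (le_mul_sq two_pos) rfl (by simp)
      (c := fun a => (T ℝ (4 * a)).eval (x / 2)) (fun _ => rfl) (fun a => hT_even _ _ (by ring)),
    one_add_two_mul_mkSum (le_mul_sq four_pos) rfl (by simp)
      (c := fun a => (T ℝ (4 * a)).eval (x / 2)) (fun _ => rfl) (fun a => hT_even _ _ (by ring)),
    show (4 : ℝ⟦X⟧) * PowerSeries.X ^ 2 = (2 * PowerSeries.X) ^ 2 by ring, ← mul_pow, mul_assoc,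
    two_mul_X_mul_mkSum (c := fun s => (T ℝ (4 * s + 2)).eval (x / 2))
      (fun n => by push_cast; ring_nf) (fun s => hT_even _ _ (by ring))]
  rw [weightSeries_mul (hasFiniteSublevels_mul_natAbs_sq two_pos)
      (hasFiniteSublevels_mul_natAbs_sq two_pos), weightSeries_two_sq_add_two_sq,
    ← weightSeries_chebyshevT_sub (hasFiniteSublevels_mul_natAbs_sq four_pos) (fun s => 4 * s)
      (Equiv.neg ℤ) (by simp) (by simp),
    ← weightSeries_chebyshevT_sub hasFiniteSublevels_natAbs_two_mul_add_one_sq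
      (fun s => 4 * s + 2) (Equiv.subLeft (-1))
      (fun s => show (2 * (-1 - s) + 1).natAbs ^ 2 = _ by congr 1; omega)
      (fun s => show 4 * (-1 - s) + 2 = _ by ring)]
  congr 2 <;> funext p <;> ring_nf
end

section
/- For every real number x, the following identity holds in ℝ[[q]]: (∑_{n≥1} q^{2n(n−1)})·(∑_{n≥1} T_{4n−2}(x/2) q^{2n(n−1)}) = (1 + 2∑_{n≥1} T_{4n}(x/2) q^{4n²})·(∑_{n≥1} T_{4n−2}(x/2) q^{4n(n−1)}). -/
open PowerSeries

section LatticeSeries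

variable {R ι κ : Type*} [CommSemiring R]

/-- `∑ᵢ c i * q ^ e i`. The coefficients are `finsum`s, so they are meaningful (rather than `0`)
only when the fibres of `e` are finite. -/
noncomputable def latticeSeries (e : ι → ℕ) (c : ι → R) : R⟦X⟧ :=
  PowerSeries.mk fun k => ∑ᶠ i ∈ e ⁻¹' {k}, c i

def FiniteSublevels (e : ι → ℕ) : Prop :=
  ∀ k, {i | e i ≤ k}.Finite

theorem FiniteSublevels.comp_injective {e : ι → ℕ} (he : FiniteSublevels e) {f : κ → ι}
    (hf : f.Injective) : FiniteSublevels (e ∘ f) :=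
  fun k => (he k).preimage hf.injOn

theorem FiniteSublevels.add {e : ι → ℕ} {e' : κ → ℕ} (he : FiniteSublevels e)
    (he' : FiniteSublevels e') : FiniteSublevels fun p : ι × κ => e p.1 + e' p.2 :=
  fun k => ((he k).prod (he' k)).subset fun p (hp : e p.1 + e' p.2 ≤ k) =>
    ⟨show e p.1 ≤ k by omega, show e' p.2 ≤ k by omega⟩

theorem finiteSublevels_of_natAbs_le {e : ℤ → ℕ} (h : ∀ n, n.natAbs ≤ e n + 1) :
    FiniteSublevels e :=
  fun k => (Set.finite_Icc (-(k + 1 : ℤ)) (k + 1)).subset fun n (hn : e n ≤ k) => by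
    have := h n
    simp only [Set.mem_Icc]
    omega

theorem coeff_latticeSeries (e : ι → ℕ) (c : ι → R) (k : ℕ) :
    coeff k (latticeSeries e c) = ∑ᶠ i ∈ e ⁻¹' {k}, c i :=
  coeff_mk _ _

theorem coeff_latticeSeries_eq_sum {e : ι → ℕ} (c : ι → R) {k : ℕ} (s : Finset ι)
    (hs : ∀ i, e i = k → i ∈ s) :
    coeff k (latticeSeries e c) = ∑ i ∈ s, if e i = k then c i else 0 := by
  classical
  rw [coeff_latticeSeries, finsum_mem_def,
    finsum_eq_sum_of_support_subset _ (s := s) fun i hi => hs i ?_]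
  · simp only [Set.indicator_apply, Set.mem_preimage, Set.mem_singleton_iff]
  · simpa using Set.support_indicator_subset hi

theorem latticeSeries_comp_equiv (σ : κ ≃ ι) (e : ι → ℕ) (c : ι → R) :
    latticeSeries (e ∘ σ) (c ∘ σ) = latticeSeries e c := by
  ext k
  simp only [coeff_latticeSeries]
  exact finsum_comp_equiv σ (f := fun i => ∑ᶠ (_ : i ∈ e ⁻¹' {k}), c i)

theorem latticeSeries_unique [Unique ι] (e : ι → ℕ) (c : ι → R) :
    latticeSeries e c = monomial (e default) (c default) := by
  ext k
  rw [coeff_latticeSeries_eq_sum c {default} (fun i _ => by simp [Unique.eq_default i]),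
    coeff_monomial]
  simp [eq_comm]

theorem latticeSeries_sum {e : ι ⊕ κ → ℕ} (he : FiniteSublevels e) (c : ι ⊕ κ → R) :
    latticeSeries e c =
      latticeSeries (e ∘ Sum.inl) (c ∘ Sum.inl) +
        latticeSeries (e ∘ Sum.inr) (c ∘ Sum.inr) := by
  ext k
  set s₁ := (he k).toFinset.preimage Sum.inl Sum.inl_injective.injOn
  set s₂ := (he k).toFinset.preimage Sum.inr Sum.inr_injective.injOn
  rw [map_add, coeff_latticeSeries_eq_sum c (s₁.disjSum s₂)
      (by rintro (i | i) <;> simp +contextual [s₁, s₂]),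
    coeff_latticeSeries_eq_sum _ s₁ (by simp +contextual [s₁]),
    coeff_latticeSeries_eq_sum _ s₂ (by simp +contextual [s₂]), Finset.sum_disjSum]
  rfl

theorem latticeSeries_add {e : ι → ℕ} (he : FiniteSublevels e) (c d : ι → R) :
    latticeSeries e (c + d) = latticeSeries e c + latticeSeries e d := by
  ext k
  have hs : ∀ i, e i = k → i ∈ (he k).toFinset := by simp +contextual
  rw [map_add, coeff_latticeSeries_eq_sum _ _ hs, coeff_latticeSeries_eq_sum _ _ hs,
    coeff_latticeSeries_eq_sum _ _ hs, ← Finset.sum_add_distrib]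
  refine Finset.sum_congr rfl fun i _ => ?_
  split_ifs <;> simp

theorem latticeSeries_mul {e : ι → ℕ} {e' : κ → ℕ} (he : FiniteSublevels e)
    (he' : FiniteSublevels e') (c : ι → R) (c' : κ → R) :
    latticeSeries e c * latticeSeries e' c' =
      latticeSeries (fun p : ι × κ => e p.1 + e' p.2) (fun p => c p.1 * c' p.2) := by
  classical
  ext N
  set s := (he N).toFinset
  set t := (he' N).toFinset
  have hcoeff : ∀ a ∈ Finset.HasAntidiagonal.antidiagonal N,
      coeff a.1 (latticeSeries e c) * coeff a.2 (latticeSeries e' c') =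
        ∑ i ∈ s, ∑ j ∈ t, if a = (e i, e' j) then c i * c' j else 0 := by
    intro a ha
    rw [Finset.HasAntidiagonal.mem_antidiagonal] at ha
    rw [coeff_latticeSeries_eq_sum c s (by simp [s]; omega),
      coeff_latticeSeries_eq_sum c' t (by simp [t]; omega), Finset.sum_mul_sum]
    refine Finset.sum_congr rfl fun i _ => Finset.sum_congr rfl fun j _ => ?_
    rw [ite_zero_mul_ite_zero]
    simp only [Prod.ext_iff, eq_comm (a := a.1), eq_comm (a := a.2)]
  rw [coeff_mul, Finset.sum_congr rfl hcoeff, Finset.sum_comm,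
    coeff_latticeSeries_eq_sum _ (s ×ˢ t) (by simp [s, t]; omega), Finset.sum_product]
  refine Finset.sum_congr rfl fun i _ => ?_
  rw [Finset.sum_comm]
  refine Finset.sum_congr rfl fun j _ => ?_
  simp only [Finset.sum_ite_eq', Finset.HasAntidiagonal.mem_antidiagonal]

theorem latticeSeries_nat {e : ℕ → ℕ} (he : FiniteSublevels e) (c : ℕ → R) :
    latticeSeries e c =
      monomial (e 0) (c 0) + latticeSeries (fun n => e (n + 1)) (fun n => c (n + 1)) := by
  rw [← latticeSeries_comp_equiv Equiv.natSumPUnitEquivNat.{0},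
    latticeSeries_sum (he.comp_injective (Equiv.injective _)), latticeSeries_unique (ι := PUnit),
    add_comm]
  rfl

theorem latticeSeries_int {e : ℤ → ℕ} (he : FiniteSublevels e) (c : ℤ → R) :
    latticeSeries e c =
      latticeSeries (fun n : ℕ => e n) (fun n => c n) +
        latticeSeries (fun n => e (Int.negSucc n)) (fun n => c (Int.negSucc n)) := by
  rw [← latticeSeries_comp_equiv Equiv.intEquivNatSumNat.symm,
    latticeSeries_sum (he.comp_injective (Equiv.injective _))]
  rfl

theorem latticeSeries_int_of_even {e : ℤ → ℕ} (he : FiniteSublevels e) {c : ℤ → R}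
    (he_neg : ∀ n, e (-n) = e n) (hc_neg : ∀ n, c (-n) = c n) :
    latticeSeries e c =
      monomial (e 0) (c 0) + 2 * latticeSeries (fun n : ℕ => e (n + 1)) (fun n => c (n + 1)) := by
  rw [latticeSeries_int he,
    latticeSeries_nat (e := fun n : ℕ => e n) (he.comp_injective Nat.cast_injective)]
  simp only [Int.negSucc_eq, he_neg, hc_neg, Nat.cast_zero, Nat.cast_succ, add_assoc, two_mul]

theorem latticeSeries_int_of_reflect {e : ℤ → ℕ} (he : FiniteSublevels e) {c : ℤ → R}
    (he_refl : ∀ n, e (1 - n) = e n) (hc_refl : ∀ n, c (1 - n) = c n) :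
    latticeSeries e c = 2 * latticeSeries (fun n : ℕ => e (n + 1)) (fun n => c (n + 1)) := by
  have hsucc (n : ℕ) : Int.negSucc n + 1 = 1 - (n + 1) := by
    rw [Int.negSucc_eq]
    ring
  rw [← latticeSeries_comp_equiv (Equiv.addRight (1 : ℤ)),
    latticeSeries_int (he.comp_injective (Equiv.injective _))]
  simp only [Function.comp_apply, Equiv.coe_addRight, hsucc, he_refl, hc_refl, two_mul]

end LatticeSeries

theorem mkSum_eq_latticeSeries {e : ℕ → ℕ} (he : ∀ n, n ≤ e n + 1) (c : ℕ → ℝ) :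
    mkSum e c = latticeSeries (fun n => e (n + 1)) (fun n => c (n + 1)) := by
  ext k
  rw [mkSum, coeff_mk, Finset.sum_range_succ',
    coeff_latticeSeries_eq_sum _ (Finset.range (k + 1)) fun n hn => by
      have := he (n + 1)
      rw [Finset.mem_range]
      omega]
  simp

theorem latticeSeries_eq_two_mul_mkSum_of_reflect {e : ℤ → ℕ}
    (he : ∀ n, n.natAbs ≤ e n + 1) {c : ℤ → ℝ} (he_refl : ∀ n, e (1 - n) = e n)
    (hc_refl : ∀ n, c (1 - n) = c n) :
    latticeSeries e c = 2 * mkSum (fun n => e n) (fun n => c n) := by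
  rw [latticeSeries_int_of_reflect (finiteSublevels_of_natAbs_le he) he_refl hc_refl,
    mkSum_eq_latticeSeries fun n => by simpa using he n]
  push_cast
  rfl

theorem latticeSeries_eq_monomial_add_two_mul_mkSum_of_even {e : ℤ → ℕ}
    (he : ∀ n, n.natAbs ≤ e n + 1) {c : ℤ → ℝ} (he_neg : ∀ n, e (-n) = e n)
    (hc_neg : ∀ n, c (-n) = c n) :
    latticeSeries e c = monomial (e 0) (c 0) + 2 * mkSum (fun n => e n) (fun n => c n) := by
  rw [latticeSeries_int_of_even (finiteSublevels_of_natAbs_le he) he_neg hc_neg,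
    mkSum_eq_latticeSeries fun n => by simpa using he n]
  push_cast
  rfl

def pronic (n : ℤ) : ℕ :=
  (n * (n - 1)).toNat

theorem natCast_pronic (n : ℤ) : (pronic n : ℤ) = n * (n - 1) :=
  Int.toNat_of_nonneg (by rcases le_or_gt n 0 with h | h <;> nlinarith)

theorem pronic_natCast (n : ℕ) : pronic n = n * (n - 1) := by
  rcases n with _ | n
  · rfl
  · zify [natCast_pronic]
    push_cast
    ring

theorem pronic_one_sub (n : ℤ) : pronic (1 - n) = pronic n := by
  rw [pronic, pronic]
  ring_nf

theorem pronic_add_add_pronic_sub (n m : ℤ) :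
    pronic (n + m) + pronic (n - m) = 2 * m.natAbs ^ 2 + 2 * pronic n := by
  zify [natCast_pronic]
  rw [sq_abs]
  ring

theorem natAbs_le_pronic_add_one (n : ℤ) : n.natAbs ≤ pronic n + 1 := by
  zify [natCast_pronic]
  rcases abs_cases n with ⟨h, _⟩ | ⟨h, _⟩ <;> rw [h] <;> nlinarith [sq_nonneg (n - 1)]

theorem natAbs_le_mul_pronic_add_one {k : ℕ} (hk : 0 < k) (n : ℤ) :
    n.natAbs ≤ k * pronic n + 1 :=
  (natAbs_le_pronic_add_one n).trans (by gcongr; exact Nat.le_mul_of_pos_left _ hk)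

theorem natAbs_le_mul_natAbs_sq_add_one {k : ℕ} (hk : 0 < k) (n : ℤ) :
    n.natAbs ≤ k * n.natAbs ^ 2 + 1 := by
  nlinarith [Nat.le_self_pow two_ne_zero n.natAbs]

/-- The two copies of `ℤ × ℤ` parametrize the two cosets of `{(j, k) | j + k even}`: the
second by `(m, n) ↦ (n + m, n - m)`, the first by the same map followed by `j ↦ 1 - j`. -/
def rotateEquiv : (ℤ × ℤ) ⊕ (ℤ × ℤ) ≃ ℤ × ℤ where
  toFun := Sum.elim (fun p => (1 - (p.2 - p.1), p.2 + p.1)) (fun p => (p.2 + p.1, p.2 - p.1))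
  invFun p := if (p.1 + p.2) % 2 = 1 then Sum.inl ((p.1 + p.2 - 1) / 2, (p.2 - p.1 + 1) / 2)
    else Sum.inr ((p.1 - p.2) / 2, (p.1 + p.2) / 2)
  left_inv := by
    rintro (⟨m, n⟩ | ⟨m, n⟩) <;> dsimp only [Sum.elim_inl, Sum.elim_inr] <;> split_ifs
    all_goals first | omega | (congr 1; ext <;> dsimp only <;> omega)
  right_inv := by
    rintro ⟨j, k⟩
    dsimp only
    split_ifs <;> ext <;> dsimp only [Sum.elim_inl, Sum.elim_inr] <;> omega

theorem latticeSeries_two_mul_pronic_mul {R : Type*} [CommSemiring R] (C : ℤ → R)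
    (hC : ∀ a b, C (a + b) + C (a - b) = 2 * C a * C b) :
    latticeSeries (fun n : ℤ => 2 * pronic n) (fun _ => 1) *
        latticeSeries (fun n : ℤ => 2 * pronic n) (fun n => C (4 * n - 2)) =
      2 * (latticeSeries (fun m : ℤ => 4 * m.natAbs ^ 2) (fun m => C (4 * m)) *
        latticeSeries (fun n : ℤ => 4 * pronic n) (fun n => C (4 * n - 2))) := by
  have h₂ : FiniteSublevels fun n : ℤ => 2 * pronic n :=
    finiteSublevels_of_natAbs_le (natAbs_le_mul_pronic_add_one two_pos)
  have h₀ : FiniteSublevels fun m : ℤ => 4 * m.natAbs ^ 2 :=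
    finiteSublevels_of_natAbs_le (natAbs_le_mul_natAbs_sq_add_one four_pos)
  have h₄ : FiniteSublevels fun n : ℤ => 4 * pronic n :=
    finiteSublevels_of_natAbs_le (natAbs_le_mul_pronic_add_one four_pos)
  set E : ℤ × ℤ → ℕ := fun p => 4 * p.1.natAbs ^ 2 + 4 * pronic p.2
  have hE :
      (fun p : ℤ × ℤ => 2 * pronic p.1 + 2 * pronic p.2) ∘ rotateEquiv = Sum.elim E E := by
    ext (⟨m, n⟩ | ⟨m, n⟩) <;> simp only [Function.comp_apply, rotateEquiv, Equiv.coe_fn_mk,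
      Sum.elim_inl, Sum.elim_inr, pronic_one_sub, E] <;>
      linarith [pronic_add_add_pronic_sub n m]
  have hw : (fun p : ℤ × ℤ => 1 * C (4 * p.2 - 2)) ∘ rotateEquiv =
      Sum.elim (fun p => C (4 * (p.2 + p.1) - 2)) (fun p => C (4 * (p.2 - p.1) - 2)) := by
    ext (⟨m, n⟩ | ⟨m, n⟩) <;> simp [rotateEquiv]
  have hsum : ((fun p : ℤ × ℤ => C (4 * (p.2 + p.1) - 2)) + fun p => C (4 * (p.2 - p.1) - 2)) =
      (fun p => C (4 * p.1) * C (4 * p.2 - 2)) + fun p => C (4 * p.1) * C (4 * p.2 - 2) := by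
    ext ⟨m, n⟩
    calc C (4 * (n + m) - 2) + C (4 * (n - m) - 2)
        = C ((4 * n - 2) + 4 * m) + C ((4 * n - 2) - 4 * m) := by ring_nf
      _ = _ := by rw [hC]; simp only [Pi.add_apply]; ring
  have hE' : FiniteSublevels E := h₀.add h₄
  calc _ = latticeSeries (fun p : ℤ × ℤ => 2 * pronic p.1 + 2 * pronic p.2)
        (fun p => 1 * C (4 * p.2 - 2)) := latticeSeries_mul h₂ h₂ _ _
    _ = latticeSeries (Sum.elim E E)
        (Sum.elim (fun p => C (4 * (p.2 + p.1) - 2)) (fun p => C (4 * (p.2 - p.1) - 2))) := by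
      rw [← latticeSeries_comp_equiv rotateEquiv, hE, hw]
    _ = latticeSeries E (fun p => C (4 * (p.2 + p.1) - 2)) +
        latticeSeries E (fun p => C (4 * (p.2 - p.1) - 2)) :=
      latticeSeries_sum (hE ▸ (h₂.add h₂).comp_injective rotateEquiv.injective) _
    _ = 2 * latticeSeries E (fun p => C (4 * p.1) * C (4 * p.2 - 2)) := by
      rw [← latticeSeries_add hE', hsum, latticeSeries_add hE', two_mul]
    _ = _ := by rw [latticeSeries_mul h₀ h₄]

theorem mkSum_dissection_of_dAlembert (C : ℤ → ℝ) (hC_zero : C 0 = 1)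
    (hC_neg : ∀ k, C (-k) = C k) (hC : ∀ a b, C (a + b) + C (a - b) = 2 * C a * C b) :
    (mkSum (fun n => 2 * n * (n - 1)) fun _ => 1) *
        (mkSum (fun n => 2 * n * (n - 1)) fun n => C (4 * n - 2)) =
      (1 + 2 * mkSum (fun n => 4 * n ^ 2) fun n => C (4 * n)) *
        (mkSum (fun n => 4 * n * (n - 1)) fun n => C (4 * n - 2)) := by
  have hC_refl (n : ℤ) : C (4 * (1 - n) - 2) = C (4 * n - 2) := by
    rw [show 4 * (1 - n) - 2 = -(4 * n - 2) by ring, hC_neg]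
  have key := latticeSeries_two_mul_pronic_mul C hC
  rw [latticeSeries_eq_two_mul_mkSum_of_reflect (c := fun _ => 1)
      (natAbs_le_mul_pronic_add_one two_pos) (fun n => by rw [pronic_one_sub]) fun _ => rfl,
    latticeSeries_eq_two_mul_mkSum_of_reflect (natAbs_le_mul_pronic_add_one two_pos)
      (fun n => by rw [pronic_one_sub]) hC_refl,
    latticeSeries_eq_two_mul_mkSum_of_reflect (natAbs_le_mul_pronic_add_one four_pos)
      (fun n => by rw [pronic_one_sub]) hC_refl,
    latticeSeries_eq_monomial_add_two_mul_mkSum_of_even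
      (natAbs_le_mul_natAbs_sq_add_one four_pos) (fun n => by rw [Int.natAbs_neg])
      (fun n => by rw [mul_neg, hC_neg])] at key
  simp only [pronic_natCast, Int.natAbs_natCast, Int.natAbs_zero, Nat.zero_pow two_pos, mul_zero,
    ← mul_assoc, hC_zero, monomial_zero_eq_C, map_one] at key
  have h4 : (4 : ℝ⟦X⟧) ≠ 0 := by
    rw [← map_ofNat (PowerSeries.C (R := ℝ)) 4]
    simp
  exact mul_left_cancel₀ h4 (by linear_combination key)

/-- For every real `x`:
`(∑_{n≥1} q^{2n(n-1)})(∑_{n≥1} T_{4n-2}(x/2) q^{2n(n-1)})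
  = (1 + 2∑_{n≥1} T_{4n}(x/2) q^{4n²})(∑_{n≥1} T_{4n-2}(x/2) q^{4n(n-1)})` in `ℝ[[q]]`. -/
theorem cheby_dissection_odd (x : ℝ) :
    (mkSum (fun n => 2 * n * (n - 1)) fun _ => 1) *
        (mkSum (fun n => 2 * n * (n - 1)) fun n =>
          (Polynomial.Chebyshev.T ℝ (4 * (n : ℤ) - 2)).eval (x / 2)) =
      (1 + 2 * mkSum (fun n => 4 * n ^ 2) fun n =>
          (Polynomial.Chebyshev.T ℝ (4 * (n : ℤ))).eval (x / 2)) *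
        (mkSum (fun n => 4 * n * (n - 1)) fun n =>
          (Polynomial.Chebyshev.T ℝ (4 * (n : ℤ) - 2)).eval (x / 2)) := by
  refine mkSum_dissection_of_dAlembert (fun k => (Polynomial.Chebyshev.T ℝ k).eval (x / 2))
    (by simp) (fun k => by simp) fun a b => ?_
  simp only [← Polynomial.eval_add, ← Polynomial.Chebyshev.T_mul_T, Polynomial.eval_mul,
    Polynomial.eval_ofNat]
end

section
/- For every real number x, H(G(2,q)·G(x,q)) = G(x,q)² in ℝ[[q]]. -/
/-- `G(x,q) = 1 + 2 ∑_{n ≥ 1} T_{2n}(x/2) q^{n²}`, where `T` is the Chebyshev polynomial of the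
first kind. -/
noncomputable def G (x : ℝ) : PowerSeries ℝ :=
  1 + 2 * mkSum (fun n => n ^ 2) fun n => (Polynomial.Chebyshev.T ℝ (2 * (n : ℤ))).eval (x / 2)

/-- The 2-dissection ("huffing") operator `H(∑ a_n q^n) = ∑ a_{2n} q^n`. -/
noncomputable def H (F : PowerSeries ℝ) : PowerSeries ℝ :=
  PowerSeries.mk fun n => PowerSeries.coeff (R := ℝ) (2 * n) F

open Finset PowerSeries Polynomial.Chebyshev

noncomputable def intSqrts (k : ℕ) : Finset ℤ := {n ∈ Icc (-(k : ℤ)) k | n ^ 2 = k}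

theorem neg_le_and_le_of_sq_le {n m : ℤ} (h : n ^ 2 ≤ m) : -m ≤ n ∧ n ≤ m :=
  abs_le.mp <| (Int.natCast_natAbs n ▸ Int.natAbs_le_self_sq n).trans h

theorem mem_intSqrts {k : ℕ} {n : ℤ} : n ∈ intSqrts k ↔ n ^ 2 = k := by
  simp only [intSqrts, mem_filter, mem_Icc, and_iff_right_iff_imp]
  exact fun h => neg_le_and_le_of_sq_le h.le

theorem intSqrts_sq (m : ℕ) : intSqrts (m ^ 2) = {(m : ℤ), -(m : ℤ)} := by
  ext n
  rw [mem_intSqrts, mem_insert, mem_singleton, Nat.cast_pow, sq_eq_sq_iff_eq_or_eq_neg]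

theorem intSqrts_eq_empty {k : ℕ} (hk : ∀ m : ℕ, m ^ 2 ≠ k) : intSqrts k = ∅ :=
  eq_empty_of_forall_notMem fun n hn => hk n.natAbs <| by
    rw [mem_intSqrts] at hn
    exact_mod_cast (Int.natAbs_sq n).trans hn

noncomputable def circlePoints (N : ℕ) : Finset (ℤ × ℤ) :=
  {p ∈ Icc (-(N : ℤ)) N ×ˢ Icc (-(N : ℤ)) N | p.1 ^ 2 + p.2 ^ 2 = N}

theorem mem_circlePoints {N : ℕ} {p : ℤ × ℤ} : p ∈ circlePoints N ↔ p.1 ^ 2 + p.2 ^ 2 = N := by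
  simp only [circlePoints, mem_filter, mem_product, mem_Icc, and_iff_right_iff_imp]
  intro h
  exact ⟨neg_le_and_le_of_sq_le (by nlinarith), neg_le_and_le_of_sq_le (by nlinarith)⟩

theorem even_add_of_sq_add_sq_eq_two_mul {m n k : ℤ} (h : m ^ 2 + n ^ 2 = 2 * k) :
    Even (m + n) := by
  have : Even (m ^ 2 + n ^ 2) := h ▸ even_two_mul k
  simpa [Int.even_add, Int.even_pow] using this

section circlePoints

variable {M : Type*} [AddCommMonoid M]

theorem sum_circlePoints_neg_snd (f : ℤ × ℤ → M) (N : ℕ) :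
    ∑ p ∈ circlePoints N, f (p.1, -p.2) = ∑ p ∈ circlePoints N, f p :=
  sum_equiv ((Equiv.refl ℤ).prodCongr (Equiv.neg ℤ)) (by simp [mem_circlePoints])
    (fun _ _ => rfl)

theorem sum_circlePoints_two_mul (f : ℤ × ℤ → M) (k : ℕ) :
    ∑ p ∈ circlePoints (2 * k), f p = ∑ p ∈ circlePoints k, f (p.1 + p.2, p.1 - p.2) := by
  symm
  -- `m ^ 2 + n ^ 2 = 2 * k` forces `m + n` to be even, so the halvings below are exact.
  refine sum_nbij' (fun p => (p.1 + p.2, p.1 - p.2)) (fun p => ((p.1 + p.2) / 2, (p.1 - p.2) / 2))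
    ?_ ?_ ?_ ?_ fun _ _ => rfl
  · rintro ⟨a, b⟩ h
    simp only [mem_circlePoints] at h ⊢
    push_cast
    linear_combination 2 * h
  · rintro ⟨m, n⟩ h
    simp only [mem_circlePoints] at h ⊢
    push_cast at h
    obtain ⟨c, hc⟩ := even_add_of_sq_add_sq_eq_two_mul h
    rw [show (m + n) / 2 = c by omega, show (m - n) / 2 = c - n by omega]
    have : 2 * (c ^ 2 + (c - n) ^ 2) = 2 * k := by
      rw [show m = c + c - n by omega] at h
      linear_combination h
    omega
  · rintro ⟨a, b⟩ -
    simp only [Prod.mk.injEq]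
    omega
  · rintro ⟨m, n⟩ h
    simp only [mem_circlePoints] at h
    push_cast at h
    obtain ⟨c, hc⟩ := even_add_of_sq_add_sq_eq_two_mul h
    simp only [Prod.mk.injEq]
    omega

end circlePoints

theorem sum_circlePoints_mul_eq_sum_sub {R : Type*} [CommRing R] [IsDomain R] [NeZero (2 : R)]
    {f : ℤ → R} (hf : ∀ a b, 2 * (f a * f b) = f (a + b) + f (a - b)) (N : ℕ) :
    ∑ p ∈ circlePoints N, f p.1 * f p.2 = ∑ p ∈ circlePoints N, f (p.1 - p.2) := by
  have hsymm : ∑ p ∈ circlePoints N, f (p.1 + p.2) = ∑ p ∈ circlePoints N, f (p.1 - p.2) := by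
    rw [← sum_circlePoints_neg_snd]
    simp only [sub_eq_add_neg]
  apply mul_left_cancel₀ (two_ne_zero (α := R))
  rw [mul_sum, sum_congr rfl fun p _ => hf p.1 p.2, sum_add_distrib, hsymm, two_mul]

noncomputable def thetaSeries {R : Type*} [Semiring R] (f : ℤ → R) : PowerSeries R :=
  mk fun k => ∑ n ∈ intSqrts k, f n

section thetaSeries

variable {R : Type*} [Semiring R]

theorem coeff_thetaSeries (f : ℤ → R) (k : ℕ) :
    coeff k (thetaSeries f) = ∑ n ∈ intSqrts k, f n :=
  coeff_mk _ _

theorem coeff_thetaSeries_mul (f g : ℤ → R) (N : ℕ) :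
    coeff N (thetaSeries f * thetaSeries g) = ∑ p ∈ circlePoints N, f p.1 * g p.2 := by
  have hmaps : ∀ p ∈ circlePoints N,
      ((p.1 ^ 2).toNat, (p.2 ^ 2).toNat) ∈ antidiagonal N := by
    intro p hp
    rw [mem_circlePoints] at hp
    rw [HasAntidiagonal.mem_antidiagonal]
    have := sq_nonneg p.1
    have := sq_nonneg p.2
    omega
  rw [coeff_mul, ← sum_fiberwise_of_maps_to hmaps]
  refine sum_congr rfl fun ij hij => ?_
  rw [coeff_thetaSeries, coeff_thetaSeries, sum_mul_sum, ← sum_product']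
  refine sum_congr ?_ fun _ _ => rfl
  ext p
  rw [HasAntidiagonal.mem_antidiagonal] at hij
  simp only [mem_product, mem_intSqrts, mem_filter, mem_circlePoints, Prod.ext_iff]
  have := sq_nonneg p.1
  have := sq_nonneg p.2
  omega

end thetaSeries

theorem coeff_mkSum_apply {e : ℕ → ℕ} (he : StrictMono e) (c : ℕ → ℝ) {m : ℕ} (hm : 1 ≤ m) :
    coeff (e m) (mkSum e c) = c m := by
  rw [mkSum, coeff_mk, sum_eq_single m]
  · simp [hm]
  · intro n _ hn
    simp [he.injective.ne hn]
  · intro h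
    exact absurd (mem_range.2 (by have := he.le_apply (x := m); omega)) h

theorem coeff_mkSum_eq_zero (e : ℕ → ℕ) (c : ℕ → ℝ) {k : ℕ} (hk : ∀ m, 1 ≤ m → e m ≠ k) :
    coeff k (mkSum e c) = 0 := by
  rw [mkSum, coeff_mk]
  exact sum_eq_zero fun m _ => if_neg fun h => hk m h.1 h.2

theorem G_eq_thetaSeries (x : ℝ) : G x = thetaSeries fun n => (T ℝ (2 * n)).eval (x / 2) := by
  ext k
  have hsq : StrictMono fun n : ℕ => n ^ 2 := Nat.pow_left_strictMono two_ne_zero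
  rw [G, coeff_thetaSeries, map_add, coeff_one, ← map_ofNat (PowerSeries.C (R := ℝ)) 2, coeff_C_mul]
  by_cases hk : ∃ m : ℕ, m ^ 2 = k
  · obtain ⟨m, rfl⟩ := hk
    rw [intSqrts_sq]
    rcases Nat.eq_zero_or_pos m with rfl | hm
    · rw [coeff_mkSum_eq_zero _ _ fun m hm => by positivity]
      simp
    · rw [coeff_mkSum_apply hsq _ hm, sum_pair (by omega), mul_neg, T_neg, if_neg (by positivity)]
      ring
  · push Not at hk
    have hk0 : k ≠ 0 := fun h => hk 0 h.symm
    rw [intSqrts_eq_empty hk, coeff_mkSum_eq_zero _ _ fun m _ => hk m]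
    simp [hk0]

theorem H_thetaSeries_one_mul {f : ℤ → ℝ} (hf : ∀ a b, 2 * (f a * f b) = f (a + b) + f (a - b)) :
    H (thetaSeries 1 * thetaSeries f) = thetaSeries f ^ 2 := by
  ext k
  rw [H, coeff_mk, sq, coeff_thetaSeries_mul, coeff_thetaSeries_mul, sum_circlePoints_two_mul,
    sum_circlePoints_mul_eq_sum_sub hf]
  simp only [Pi.one_apply, one_mul]

theorem G_two : G 2 = thetaSeries 1 := by
  rw [G_eq_thetaSeries]
  congr
  funext n
  norm_num [T_eval_one]

theorem two_mul_eval_T_mul_eval_T {R : Type*} [CommRing R] (y : R) (m k : ℤ) :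
    2 * ((T R m).eval y * (T R k).eval y) = (T R (m + k)).eval y + (T R (m - k)).eval y := by
  rw [← mul_assoc, ← Polynomial.eval_ofNat 2 y, ← Polynomial.eval_mul, ← Polynomial.eval_mul,
    T_mul_T, Polynomial.eval_add]

/-- For every real `x`, `H(G(2,q) G(x,q)) = G(x,q)²`. -/
theorem huff_G_two_mul_G (x : ℝ) : H (G 2 * G x) = G x ^ 2 := by
  rw [G_two, G_eq_thetaSeries]
  refine H_thetaSeries_one_mul fun a b => ?_
  rw [mul_add, mul_sub]
  exact two_mul_eval_T_mul_eval_T (x / 2) (2 * a) (2 * b)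
end

section
/- For all n ≥ 0 and k ≥ 0: ∑_λ m(λ), summed over partitions λ of 2n into odd parts with exactly k distinct part sizes, each of which occurs an even number of times, equals ∑_{(μ,ν)} m(μ)·m(ν), summed over ordered pairs (μ,ν) of partitions into odd parts with |μ|+|ν| = n, ℓ_d(μ)+ℓ_d(ν) = k, and no part size occurring in both μ and ν. That is, the number of PDO partitions of 2n with k distinct part sizes, none occurring an odd number of times, equals the number of PDO partition pairs of combined weight n with k designated parts and no common part size. -/
/-- `ℓ_d(λ)`: the number of distinct part sizes of a partition. -/
def numDistinct {n : ℕ} (l : n.Partition) : ℕ :=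
  l.parts.toFinset.card

theorem Multiset.exists_eq_add_self_of_even_count {α : Type*} [DecidableEq α] {s : Multiset α}
    (h : ∀ a ∈ s, Even (s.count a)) : ∃ t, s = t + t := by
  refine ⟨Finsupp.toMultiset (Finsupp.mapRange (· / 2) (Nat.zero_div 2) (toFinsupp s)), ?_⟩
  ext a
  rw [count_add, Finsupp.count_toMultiset, Finsupp.mapRange_apply, toFinsupp_apply]
  by_cases ha : a ∈ s
  · obtain ⟨c, hc⟩ := h a ha
    omega
  · simp [count_eq_zero_of_notMem ha]

namespace Nat.Partition

variable {i j n : ℕ}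

def join (μ : i.Partition) (ν : j.Partition) (h : i + j = n) : n.Partition where
  parts := μ.parts + ν.parts
  parts_pos hm := (Multiset.mem_add.1 hm).elim μ.parts_pos ν.parts_pos
  parts_sum := by rw [Multiset.sum_add, μ.parts_sum, ν.parts_sum, h]

section Join

variable {μ : i.Partition} {ν : j.Partition} {h : i + j = n}

@[simp]
theorem join_parts : (join μ ν h).parts = μ.parts + ν.parts := rfl

theorem join_mem_restricted_iff {p : ℕ → Prop} [DecidablePred p] :
    join μ ν h ∈ restricted n p ↔ μ ∈ restricted i p ∧ ν ∈ restricted j p := by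
  simp [restricted, or_imp, forall_and]

theorem numDistinct_join (hd : Disjoint μ.parts ν.parts) :
    numDistinct (join μ ν h) = numDistinct μ + numDistinct ν := by
  rw [numDistinct, join_parts, Multiset.toFinset_add,
    Finset.card_union_of_disjoint (Multiset.disjoint_toFinset.2 hd), numDistinct, numDistinct]

theorem pdoWeight_join (hd : Disjoint μ.parts ν.parts) :
    pdoWeight (join μ ν h) = pdoWeight μ * pdoWeight ν := by
  rw [pdoWeight, join_parts, Multiset.toFinset_add,
    Finset.prod_union (Multiset.disjoint_toFinset.2 hd)]
  congr 1 <;> refine Finset.prod_congr rfl fun a ha => ?_ <;> rw [Multiset.mem_toFinset] at ha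
  · rw [Multiset.count_add, Multiset.count_eq_zero_of_notMem (Multiset.disjoint_left.1 hd ha),
      add_zero]
  · rw [Multiset.count_add, Multiset.count_eq_zero_of_notMem (Multiset.disjoint_right.1 hd ha),
      zero_add]

end Join

def double (ρ : n.Partition) : (2 * n).Partition := join ρ ρ (two_mul n).symm

theorem double_injective : Function.Injective (double (n := n)) := fun ρ σ h => by
  ext a : 2
  have := congrArg (fun l : (2 * n).Partition => l.parts.count a) h
  simp only [double, join_parts, Multiset.count_add] at this
  omega

theorem numDistinct_double (ρ : n.Partition) : numDistinct ρ.double = numDistinct ρ := by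
  simp only [numDistinct, double, join_parts, Multiset.toFinset_add, Finset.union_self]

theorem pdoWeight_double (ρ : n.Partition) :
    pdoWeight ρ.double = 2 ^ numDistinct ρ * pdoWeight ρ := by
  simp only [pdoWeight, numDistinct, double, join_parts, Multiset.toFinset_add,
    Finset.union_self, Multiset.count_add, ← two_mul, Finset.prod_mul_distrib, Finset.prod_const]

theorem exists_double_eq (l : (2 * n).Partition)
    (h : ∀ a ∈ l.parts, Even (l.parts.count a)) : ∃ ρ : n.Partition, ρ.double = l := by
  obtain ⟨t, ht⟩ := Multiset.exists_eq_add_self_of_even_count h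
  have hsum : t.sum = n := by
    have := l.parts_sum
    rw [ht, Multiset.sum_add] at this
    omega
  exact ⟨⟨t, fun ha => l.parts_pos (ht ▸ Multiset.mem_add.2 (Or.inl ha)), hsum⟩,
    Nat.Partition.ext ht.symm⟩

theorem sum_pdoWeight_filter_even_count (p : ℕ → Prop) [DecidablePred p] (n k : ℕ) :
    ∑ l ∈ (restricted (2 * n) p).filter
        (fun l => numDistinct l = k ∧ ∀ a ∈ l.parts.toFinset, Even (l.parts.count a)),
      pdoWeight l =
    2 ^ k * ∑ ρ ∈ (restricted n p).filter (numDistinct · = k), pdoWeight ρ := by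
  rw [Finset.mul_sum]
  refine (Finset.sum_nbij double ?_ double_injective.injOn ?_ ?_).symm
  · intro ρ hρ
    rw [Finset.mem_filter] at hρ ⊢
    refine ⟨join_mem_restricted_iff.2 ⟨hρ.1, hρ.1⟩, (numDistinct_double ρ).trans hρ.2,
      fun a _ => ⟨ρ.parts.count a, Multiset.count_add ..⟩⟩
  · intro l hl
    rw [Finset.mem_coe, Finset.mem_filter] at hl
    obtain ⟨hp, hk, heven⟩ := hl
    obtain ⟨ρ, rfl⟩ := exists_double_eq l fun a ha => heven a (Multiset.mem_toFinset.2 ha)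
    exact ⟨ρ, Finset.mem_filter.2 ⟨(join_mem_restricted_iff.1 hp).1,
      (numDistinct_double ρ).symm.trans hk⟩, rfl⟩
  · intro ρ hρ
    rw [pdoWeight_double, (Finset.mem_filter.1 hρ).2]

def split (ρ : n.Partition) (S : Finset ℕ) : Σ i : ℕ, i.Partition × (n - i).Partition :=
  ⟨(ρ.parts.filter (· ∈ S)).sum,
    ⟨ρ.parts.filter (· ∈ S), fun h => ρ.parts_pos (Multiset.mem_of_mem_filter h), rfl⟩,
    ⟨ρ.parts.filter (· ∉ S), fun h => ρ.parts_pos (Multiset.mem_of_mem_filter h), by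
      have := Multiset.sum_filter_add_sum_filter_not (s := ρ.parts) (· ∈ S)
      rw [ρ.parts_sum] at this
      omega⟩⟩

theorem split_fst_le (ρ : n.Partition) (S : Finset ℕ) : (ρ.split S).1 ≤ n := by
  have := Multiset.sum_filter_add_sum_filter_not (s := ρ.parts) (· ∈ S)
  rw [ρ.parts_sum] at this
  exact Nat.le.intro this

theorem sigma_partition_ext {y z : Σ i : ℕ, i.Partition × (n - i).Partition}
    (h₁ : y.2.1.parts = z.2.1.parts) (h₂ : y.2.2.parts = z.2.2.parts) : y = z := by
  obtain ⟨i, μ, ν⟩ := y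
  obtain ⟨j, μ', ν'⟩ := z
  obtain rfl : i = j := μ.parts_sum.symm.trans (h₁ ▸ μ'.parts_sum)
  obtain rfl := Nat.Partition.ext h₁
  obtain rfl := Nat.Partition.ext h₂
  rfl

theorem split_join {μ : i.Partition} {ν : (n - i).Partition} (h : i + (n - i) = n)
    (hd : Disjoint μ.parts ν.parts) :
    (join μ ν h).split μ.parts.toFinset = ⟨i, μ, ν⟩ := by
  have hμ : ∀ a ∈ μ.parts, a ∈ μ.parts.toFinset := fun a => Multiset.mem_toFinset.2
  have hν : ∀ a ∈ ν.parts, a ∉ μ.parts.toFinset := fun a ha hμ =>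
    Multiset.disjoint_right.1 hd ha (Multiset.mem_toFinset.1 hμ)
  apply sigma_partition_ext
  · change (μ.parts + ν.parts).filter (· ∈ μ.parts.toFinset) = μ.parts
    rw [Multiset.filter_add, Multiset.filter_eq_self.2 hμ, Multiset.filter_eq_nil.2 hν, add_zero]
  · change (μ.parts + ν.parts).filter (· ∉ μ.parts.toFinset) = ν.parts
    rw [Multiset.filter_add, Multiset.filter_eq_nil.2 fun a ha h => h (hμ a ha),
      Multiset.filter_eq_self.2 hν, zero_add]

theorem join_split (ρ : n.Partition) (S : Finset ℕ)
    (h : (ρ.split S).1 + (n - (ρ.split S).1) = n) :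
    join (ρ.split S).2.1 (ρ.split S).2.2 h = ρ :=
  Nat.Partition.ext (Multiset.filter_add_not _ _)

theorem toFinset_split_fst {ρ : n.Partition} {S : Finset ℕ} (hS : S ⊆ ρ.parts.toFinset) :
    (ρ.split S).2.1.parts.toFinset = S := by
  change (ρ.parts.filter (· ∈ S)).toFinset = S
  rw [Multiset.toFinset_filter, Finset.filter_mem_eq_inter, Finset.inter_eq_right.2 hS]

theorem disjoint_split (ρ : n.Partition) (S : Finset ℕ) :
    Disjoint (ρ.split S).2.1.parts (ρ.split S).2.2.parts :=
  Multiset.disjoint_left.2 fun ha hb => Multiset.of_mem_filter hb (Multiset.of_mem_filter ha)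

def disjointPairs (p : ℕ → Prop) [DecidablePred p] (n : ℕ) :
    Finset (Σ i : ℕ, i.Partition × (n - i).Partition) :=
  ((Finset.range (n + 1)).sigma fun i => restricted i p ×ˢ restricted (n - i) p).filter
    fun y => Disjoint y.2.1.parts.toFinset y.2.2.parts.toFinset

theorem mem_disjointPairs {p : ℕ → Prop} [DecidablePred p]
    {y : Σ i : ℕ, i.Partition × (n - i).Partition} :
    y ∈ disjointPairs p n ↔ y.1 ≤ n ∧ y.2.1 ∈ restricted y.1 p ∧
      y.2.2 ∈ restricted (n - y.1) p ∧ Disjoint y.2.1.parts y.2.2.parts := by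
  simp [disjointPairs, and_assoc]

theorem sum_disjointPairs_eq_sum_sigma_powerset {M : Type*} [AddCommMonoid M]
    (p : ℕ → Prop) [DecidablePred p] (n : ℕ) (g : ℕ → ℕ → M) :
    ∑ y ∈ disjointPairs p n,
      g (numDistinct y.2.1 + numDistinct y.2.2) (pdoWeight y.2.1 * pdoWeight y.2.2) =
    ∑ x ∈ (restricted n p).sigma (fun ρ => ρ.parts.toFinset.powerset),
      g (numDistinct x.1) (pdoWeight x.1) := by
  have hsum : ∀ y ∈ disjointPairs p n, y.1 + (n - y.1) = n := fun y hy =>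
    Nat.add_sub_cancel' (mem_disjointPairs.1 hy).1
  refine Finset.sum_bij' (fun y hy => ⟨join y.2.1 y.2.2 (hsum y hy), y.2.1.parts.toFinset⟩)
    (fun (x : Σ _ : n.Partition, Finset ℕ) _ => x.1.split x.2) ?_ ?_ ?_ ?_ ?_
  · intro y hy
    obtain ⟨-, hμ, hν, -⟩ := mem_disjointPairs.1 hy
    simp only [Finset.mem_sigma, Finset.mem_powerset, join_mem_restricted_iff]
    exact ⟨⟨hμ, hν⟩, by simp [Multiset.toFinset_add]⟩
  · rintro ⟨ρ, S⟩ hx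
    rw [Finset.mem_sigma] at hx
    have hle := split_fst_le ρ S
    have hρ :
        join (ρ.split S).2.1 (ρ.split S).2.2 (Nat.add_sub_cancel' hle) ∈ restricted n p := by
      rw [join_split]
      exact hx.1
    obtain ⟨hμ, hν⟩ := join_mem_restricted_iff.1 hρ
    exact mem_disjointPairs.2 ⟨hle, hμ, hν, disjoint_split ρ S⟩
  · intro y hy
    exact split_join (hsum y hy) (mem_disjointPairs.1 hy).2.2.2
  · rintro ⟨ρ, S⟩ hx
    rw [Finset.mem_sigma, Finset.mem_powerset] at hx
    exact Sigma.ext (join_split ρ S (Nat.add_sub_cancel' (split_fst_le ρ S)))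
      (heq_of_eq (toFinset_split_fst hx.2))
  · intro y hy
    have hd := (mem_disjointPairs.1 hy).2.2.2
    rw [numDistinct_join hd, pdoWeight_join hd]

theorem sum_pdoWeight_disjoint_pairs (p : ℕ → Prop) [DecidablePred p] (n k : ℕ) :
    ∑ i ∈ Finset.range (n + 1), ∑ μ ∈ restricted i p, ∑ ν ∈ restricted (n - i) p,
      (if numDistinct μ + numDistinct ν = k ∧ μ.parts.toFinset ∩ ν.parts.toFinset = ∅ then
        pdoWeight μ * pdoWeight ν else 0) =
    2 ^ k * ∑ ρ ∈ (restricted n p).filter (numDistinct · = k), pdoWeight ρ := by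
  calc _ = ∑ y ∈ disjointPairs p n, if numDistinct y.2.1 + numDistinct y.2.2 = k then
          pdoWeight y.2.1 * pdoWeight y.2.2 else 0 := by
        simp only [disjointPairs, Finset.sum_filter, Finset.sum_sigma, Finset.sum_product,
          Finset.disjoint_iff_inter_eq_empty, ← ite_and, and_comm]
    _ = ∑ x ∈ (restricted n p).sigma (fun ρ => ρ.parts.toFinset.powerset),
          if numDistinct x.1 = k then pdoWeight x.1 else 0 :=
        sum_disjointPairs_eq_sum_sigma_powerset p n fun d w => if d = k then w else 0
    _ = _ := by
        rw [Finset.sum_sigma, Finset.sum_filter, Finset.mul_sum]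
        refine Finset.sum_congr rfl fun ρ _ => ?_
        simp only [Finset.sum_const, Finset.card_powerset, smul_eq_mul]
        split_ifs with h
        · rw [← h, numDistinct]
        · rfl

end Nat.Partition

/-- For all `n, k ≥ 0`: the number of PDO partitions of `2n` with `k` distinct part sizes, each
occurring an even number of times, equals the number of PDO partition pairs of combined weight
`n` with `k` designated parts and no common part size. -/
theorem pdo_refined_even_multiplicities (n k : ℕ) :
    (∑ l ∈ (Nat.Partition.odds (2 * n)).filter
        (fun l => numDistinct l = k ∧ ∀ a ∈ l.parts.toFinset, Even (l.parts.count a)),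
      pdoWeight l) =
      ∑ i ∈ Finset.range (n + 1),
        ∑ mu ∈ Nat.Partition.odds i,
          ∑ nu ∈ Nat.Partition.odds (n - i),
            if numDistinct mu + numDistinct nu = k ∧
                mu.parts.toFinset ∩ nu.parts.toFinset = ∅ then
              pdoWeight mu * pdoWeight nu
            else 0 := by
  exact (Nat.Partition.sum_pdoWeight_filter_even_count _ n k).trans
    (Nat.Partition.sum_pdoWeight_disjoint_pairs _ n k).symm
end
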